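/- arXiv:2303.01419 — 4 statements merged into one kernel-verified Lean document; each statement's English description precedes it below -/
import Mathlib

section
/- Let S, S' ⊆ ℕ be finite sets containing 0 with common maximum T, let τ ≥ 0, and let u ≥ 0 be an arc capacity. Suppose x̄ : {0,…,T} × K → {0,1} assigns to each departure time t and commodity k a flow value with Σ_{k ∈ K} x̄(t,k) ≤ u for every t (the full-network arc-capacity constraint). Define x̂ : S × K → {0,1} by x̂(t₀,k) = 1 iff there exists t with prev_S(t) = t₀ and x̄(t,k) = 1. Then for every t₀ ∈ S with t₀ < T, Σ_{k ∈ K} x̂(t₀,k) ≤ u · m_S(t₀), where m_S(t₀) is the gap to the next element of S after t₀. -/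
/-- The latest time point of `S` at or before `t` (the DDD map `prev_S`). -/
def prevS (S : Finset ℕ) (t : ℕ) : ℕ := (S.filter (fun s => s ≤ t)).sup id

/-- The next time point of `S` strictly after `t`. -/
noncomputable def nS (S : Finset ℕ) (t : ℕ) : ℕ := sInf {s : ℕ | s ∈ S ∧ t < s}

/-- The gap to the next appearance in `S` after `t`. -/
noncomputable def mS (S : Finset ℕ) (t : ℕ) : ℕ := nS S t - t

theorem relaxed_arc_capacity {K : Type*} [Fintype K]
    (S S' : Finset ℕ) (h0 : (0:ℕ) ∈ S) (h0' : (0:ℕ) ∈ S')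
    (T : ℕ) (hTS : T ∈ S) (hTS' : T ∈ S')
    (hTmax : ∀ s ∈ S, s ≤ T) (hTmax' : ∀ s ∈ S', s ≤ T)
    (τ u : ℕ) (xbar : ℕ → K → ℕ)
    (hx01 : ∀ t k, xbar t k ≤ 1)
    (hcap : ∀ t ≤ T, ∑ k : K, xbar t k ≤ u) :
    ∀ t₀ ∈ S, t₀ < T →
      ({k : K | ∃ t ≤ T, prevS S t = t₀ ∧ xbar t k = 1} : Set K).ncard
        ≤ u * mS S t₀ := by
  classical
  intro t₀ ht₀S ht₀T
  have hne : {s : ℕ | s ∈ S ∧ t₀ < s}.Nonempty := ⟨T, hTS, ht₀T⟩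
  have hnmem := Nat.sInf_mem hne
  set n := nS S t₀ with hn
  have hnS : n ∈ S := hnmem.1
  have ht₀n : t₀ < n := hnmem.2
  have hnT : n ≤ T := hTmax n hnS
  have key : ∀ t, t ≤ T → prevS S t = t₀ → t₀ ≤ t ∧ t < n := by
    intro t htT hpt
    constructor
    · have : prevS S t ≤ t := Finset.sup_le (fun s hs => (Finset.mem_filter.mp hs).2)
      omega
    · by_contra h
      push_neg at h
      have : n ≤ prevS S t :=
        Finset.le_sup (f := id) (Finset.mem_filter.mpr ⟨hnS, h⟩)
      omega
  set F : Finset K :=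
    Finset.univ.filter (fun k => ∃ t ≤ T, prevS S t = t₀ ∧ xbar t k = 1) with hF
  have hset : ({k : K | ∃ t ≤ T, prevS S t = t₀ ∧ xbar t k = 1} : Set K) = ↑F := by
    ext k; simp [hF]
  rw [hset, Set.ncard_coe_finset]
  have hstep : ∀ k ∈ F, 1 ≤ ∑ t ∈ Finset.Ico t₀ n, xbar t k := by
    intro k hk
    obtain ⟨t, htT, hpt, hx⟩ := (Finset.mem_filter.mp hk).2
    obtain ⟨h1, h2⟩ := key t htT hpt
    calc 1 = xbar t k := hx.symm
      _ ≤ ∑ t ∈ Finset.Ico t₀ n, xbar t k :=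
        Finset.single_le_sum (f := fun t => xbar t k) (fun _ _ => Nat.zero_le _) (Finset.mem_Ico.mpr ⟨h1, h2⟩)
  calc F.card = ∑ k ∈ F, 1 := by simp
    _ ≤ ∑ k ∈ F, ∑ t ∈ Finset.Ico t₀ n, xbar t k := Finset.sum_le_sum hstep
    _ ≤ ∑ k : K, ∑ t ∈ Finset.Ico t₀ n, xbar t k :=
        Finset.sum_le_sum_of_subset (Finset.subset_univ F)
    _ = ∑ t ∈ Finset.Ico t₀ n, ∑ k : K, xbar t k := Finset.sum_comm
    _ ≤ ∑ _t ∈ Finset.Ico t₀ n, u :=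
        Finset.sum_le_sum (fun t ht => hcap t (by
          have := (Finset.mem_Ico.mp ht).2; omega))
    _ = (n - t₀) * u := by simp [Nat.card_Ico]
    _ = u * mS S t₀ := by rw [mS, Nat.mul_comm]
end

section
/- Let S ⊆ ℕ be finite with 0 ∈ S, let b ∈ ℕ, and let packets k ∈ K have storage intervals [a_k, d_k) ⊆ ℕ at node v (arrival a_k, departure d_k, a_k ≤ d_k) such that for every time t, at most b intervals contain t. Suppose each interval is mapped to [prev_S(a_k), prev_S(d_k)), where prev_S(u) = max { s ∈ S : s ≤ u }. Then for every time t, at most b of the mapped intervals contain t. -/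
lemma prevS_mem_le (S : Finset ℕ) (h0 : (0:ℕ) ∈ S) (u : ℕ) :
    prevS S u ∈ S ∧ prevS S u ≤ u := by
  have hne : (S.filter (fun s => s ≤ u)).Nonempty :=
    ⟨0, Finset.mem_filter.mpr ⟨h0, Nat.zero_le u⟩⟩
  have hmem : prevS S u ∈ S.filter (fun s => s ≤ u) := by
    unfold prevS
    obtain ⟨x, hx, hxeq⟩ := Finset.exists_mem_eq_sup _ hne id
    rw [hxeq]; exact hx
  exact ⟨(Finset.mem_filter.mp hmem).1, (Finset.mem_filter.mp hmem).2⟩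

lemma le_prevS (S : Finset ℕ) {s u : ℕ} (hs : s ∈ S) (hsu : s ≤ u) :
    s ≤ prevS S u :=
  Finset.le_sup (f := id) (Finset.mem_filter.mpr ⟨hs, hsu⟩)

theorem storage_capacity_preserved {K : Type*} [Fintype K]
    (S : Finset ℕ) (h0 : (0:ℕ) ∈ S) (b : ℕ)
    (a d : K → ℕ) (had : ∀ k, a k ≤ d k)
    (hcap : ∀ t : ℕ, ({k : K | a k ≤ t ∧ t < d k} : Set K).ncard ≤ b) :
    ∀ t : ℕ,
      ({k : K | prevS S (a k) ≤ t ∧ t < prevS S (d k)} : Set K).ncard ≤ b := by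
  intro t
  set t' := nS S t - 1 with ht'
  have hsub : ({k : K | prevS S (a k) ≤ t ∧ t < prevS S (d k)} : Set K) ⊆
      {k : K | a k ≤ t' ∧ t' < d k} := by
    rintro k ⟨hka, hkd⟩
    have hpd := prevS_mem_le S h0 (d k)
    have hne : {s : ℕ | s ∈ S ∧ t < s}.Nonempty := ⟨prevS S (d k), hpd.1, hkd⟩
    have hnmem : nS S t ∈ {s : ℕ | s ∈ S ∧ t < s} := Nat.sInf_mem hne
    have hnle : nS S t ≤ prevS S (d k) := Nat.sInf_le ⟨hpd.1, hkd⟩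
    have htn : t < nS S t := hnmem.2
    -- a k < nS S t
    have hak : a k < nS S t := by
      by_contra h
      push_neg at h
      have : nS S t ≤ prevS S (a k) := le_prevS S hnmem.1 h
      omega
    constructor
    · show a k ≤ t'; omega
    · show t' < d k
      have : prevS S (d k) ≤ d k := hpd.2
      omega
  calc ({k : K | prevS S (a k) ≤ t ∧ t < prevS S (d k)} : Set K).ncard
      ≤ ({k : K | a k ≤ t' ∧ t' < d k} : Set K).ncard :=
        Set.ncard_le_ncard hsub (Set.toFinite _)
    _ ≤ b := hcap t'
end

section
/- Let S ⊆ ℕ be finite with 0 ∈ S, let b ∈ ℕ, and let packets have storage intervals [a_k, d_k) at v with at most b intervals containing any time point. Fix t ∈ S and let f count the intervals stored at t originally (t ∈ [a_k, d_k)) and let g count the mapped intervals [prev_S(a_k), prev_S(d_k)) containing t. Then g ≤ f + (m_S(t) − 1)·b, where m_S(t) = min { s ∈ S : s > t } − t (taking m_S(t) = 1 if t = max S). -/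
open Classical in
theorem weak_storage_bound {K : Type*} [Fintype K]
    (S : Finset ℕ) (h0 : (0:ℕ) ∈ S) (b : ℕ)
    (a d : K → ℕ) (had : ∀ k, a k ≤ d k)
    (hcap : ∀ t : ℕ, ({k : K | a k ≤ t ∧ t < d k} : Set K).ncard ≤ b)
    (t : ℕ) (ht : t ∈ S) :
    ({k : K | prevS S (a k) ≤ t ∧ t < prevS S (d k)} : Set K).ncard ≤
      ({k : K | a k ≤ t ∧ t < d k} : Set K).ncard +
        ((if ∃ s ∈ S, t < s then mS S t else 1) - 1) * b := by
  classical
  have prev_le : ∀ x, prevS S x ≤ x := fun x =>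
    Finset.sup_le (fun s hs => (Finset.mem_filter.mp hs).2)
  have prev_ge : ∀ x s, s ∈ S → s ≤ x → s ≤ prevS S x := fun x s hsS hsx =>
    Finset.le_sup (f := id) (Finset.mem_filter.mpr ⟨hsS, hsx⟩)
  have e1 : ({k : K | prevS S (a k) ≤ t ∧ t < prevS S (d k)} : Set K).ncard
      = (Finset.univ.filter (fun k => prevS S (a k) ≤ t ∧ t < prevS S (d k))).card := by
    rw [Set.ncard_eq_toFinset_card', Set.toFinset_setOf]
  have e2 : ∀ u : ℕ, ({k : K | a k ≤ u ∧ u < d k} : Set K).ncard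
      = (Finset.univ.filter (fun k => a k ≤ u ∧ u < d k)).card := fun u => by
    rw [Set.ncard_eq_toFinset_card', Set.toFinset_setOf]
  by_cases hs : ∃ s ∈ S, t < s
  · rw [if_pos hs]
    have hne : {s : ℕ | s ∈ S ∧ t < s}.Nonempty := by
      obtain ⟨s, hsS, hts⟩ := hs; exact ⟨s, hsS, hts⟩
    obtain ⟨hnmem, htn⟩ : nS S t ∈ S ∧ t < nS S t := Nat.sInf_mem hne
    set n := nS S t with hn
    set F := Finset.univ.filter (fun k : K => a k ≤ t ∧ t < d k) with hF
    set B := (Finset.Ico (t + 1) n).biUnion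
      (fun u => Finset.univ.filter (fun k : K => a k ≤ u ∧ u < d k)) with hB
    have key : (Finset.univ.filter (fun k : K => prevS S (a k) ≤ t ∧ t < prevS S (d k)))
        ⊆ F ∪ B := by
      intro k hk
      simp only [hF, hB, Finset.mem_filter, Finset.mem_union, Finset.mem_biUnion,
        Finset.mem_Ico, Finset.mem_univ, true_and] at hk ⊢
      obtain ⟨h1, h2⟩ := hk
      have hdt : t < d k := lt_of_lt_of_le h2 (prev_le (d k))
      by_cases hat : a k ≤ t
      · exact Or.inl ⟨hat, hdt⟩
      · push_neg at hat
        have han : a k < n := by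
          by_contra h
          push_neg at h
          have := prev_ge (a k) n hnmem h
          omega
        have hadlt : a k < d k := by
          rcases lt_or_eq_of_le (had k) with h | h
          · exact h
          · rw [h] at h1; omega
        exact Or.inr ⟨a k, ⟨hat, han⟩, le_refl _, hadlt⟩
    have hBcard : B.card ≤ (mS S t - 1) * b := by
      calc B.card ≤ ∑ u ∈ Finset.Ico (t + 1) n,
            (Finset.univ.filter (fun k : K => a k ≤ u ∧ u < d k)).card :=
          Finset.card_biUnion_le
        _ ≤ ∑ _u ∈ Finset.Ico (t + 1) n, b := by
            refine Finset.sum_le_sum fun u _ => ?_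
            rw [← e2 u]; exact hcap u
        _ = (n - (t + 1)) * b := by rw [Finset.sum_const, Nat.card_Ico, smul_eq_mul]
        _ = (mS S t - 1) * b := by
            have h : n - (t + 1) = mS S t - 1 := by
              have : mS S t = n - t := rfl
              omega
            rw [h]
    rw [e1, e2, ← hF]
    have h1 := Finset.card_le_card key
    have h2 := Finset.card_union_le F B
    omega
  · rw [if_neg hs]
    push_neg at hs
    have : ({k : K | prevS S (a k) ≤ t ∧ t < prevS S (d k)} : Set K) = ∅ := by
      ext k
      simp only [Set.mem_setOf_eq, Set.mem_empty_iff_false, iff_false, not_and, not_lt]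
      intro _
      exact Finset.sup_le fun s hs' => hs s (Finset.mem_filter.mp hs').1
    rw [this]
    simp
end

section
/- Let D = (N, A) be a finite directed graph with integer transit times τ_a ≥ 1 for all arcs a. Consider any partially time-expanded network D_S satisfying property (P2), i.e., every timed arc ((v,t),(w,t')) ∈ A_S has t' ≤ t + τ_{vw}. Let x̂ be a feasible solution to UPR(D_S) with makespan T̂, meaning every timed movement arc ((v,t),(w,t')) used by some packet satisfies t + τ_{vw} ≤ T̂. If the refinement procedure only adds timed nodes of the forms (w, t + τ_{vw}) for a used short arc ((v,t),(w,t')) with t' < t + τ_{vw}, or (v, t+1) for a used arc ((v,t),(w,t')), or (z, t − τ_{zv} + 1) and (v, t+1) for a used holdover arc at (v,t) whose stored packets are all strictly before their destinations (t ≤ T̂ − 1 for such t), then every added timed node (u, s) satisfies s ≤ T̂ + 1. In particular, since T̂ ≤ T* (the optimal makespan of the full problem, as UPR(D_S) is a relaxation), all added timed nodes satisfy s ≤ T* + 1. -/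
theorem refinement_time_bound {V : Type*} (τ : V → V → ℕ)
    (hτ : ∀ v w : V, 1 ≤ τ v w)
    (That Tstar : ℕ) (hTT : That ≤ Tstar)
    (F : Set ((V × ℕ) × (V × ℕ)))
    (H : Set (V × ℕ))
    (hP2 : ∀ e ∈ F, e.2.2 ≤ e.1.2 + τ e.1.1 e.2.1)
    (hfeas : ∀ e ∈ F, e.1.2 + τ e.1.1 e.2.1 ≤ That)
    (hH : ∀ q ∈ H, q.2 + 1 ≤ That)
    (added : Set (V × ℕ))
    (hadded : added ⊆
      {n : V × ℕ | ∃ e ∈ F, e.2.2 < e.1.2 + τ e.1.1 e.2.1 ∧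
          n = (e.2.1, e.1.2 + τ e.1.1 e.2.1)} ∪
      {n : V × ℕ | ∃ e ∈ F, n = (e.1.1, e.1.2 + 1)} ∪
      {n : V × ℕ | ∃ q ∈ H, ∃ z : V,
          n = (z, q.2 - τ z q.1 + 1) ∨ n = (q.1, q.2 + 1)}) :
    ∀ n ∈ added, n.2 ≤ That + 1 ∧ n.2 ≤ Tstar + 1 := by
  intro n hn
  have h := hadded hn
  rcases h with (h | h) | h
  · obtain ⟨e, he, _, rfl⟩ := h
    have := hfeas e he
    exact ⟨by omega, by omega⟩
  · obtain ⟨e, he, rfl⟩ := h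
    have := hfeas e he
    have := hτ e.1.1 e.2.1
    exact ⟨by omega, by omega⟩
  · obtain ⟨q, hq, z, h | h⟩ := h <;> subst h <;>
      · have := hH q hq
        exact ⟨by omega, by omega⟩
end
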